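/- Let A ↪ X be a cofibration of directed graphs, ℓ ≥ 0, x ∈ X∖A, and set a = π(x), with ℓ = d(a,x) < ∞. Let A_{*,ℓ}(a,x) be the subcomplex of the magnitude chain complex MC_{*,ℓ}(X) spanned by tuples (x₀,...,x_k) with x₀=a, x_k=x, and x₁,...,x_{k-1} ∈ A. Then the homology of A_{*,ℓ}(a,x) is a single copy of R in degree 1, generated by the class of the tuple (π(x), x). -/

import Mathlib

open scoped Classical

/-- A directed graph on a vertex type `V` (loops allowed, no parallel edges). -/
structure DGraph (V : Type) where
  Adj : V → V → Prop

namespace DGraph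
variable {V : Type}

/-- There is a directed path of length `n` (i.e. with `n` edges) from `x` to `y`. -/
def PathLen (G : DGraph V) (x y : V) (n : ℕ) : Prop :=
  ∃ f : ℕ → V, f 0 = x ∧ f n = y ∧ ∀ i < n, G.Adj (f i) (f (i + 1))

/-- The shortest path metric, with values in `ℕ∞ = ℕ ∪ {∞}`. -/
noncomputable def edist (G : DGraph V) (x y : V) : ℕ∞ :=
  sInf {n : ℕ∞ | ∃ m : ℕ, n = m ∧ G.PathLen x y m}

/-- The length of a tuple of vertices: the sum of consecutive distances. -/
noncomputable def tlen (G : DGraph V) {k : ℕ} (f : Fin (k + 1) → V) : ℕ∞ :=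
  ∑ i : Fin k, G.edist (f i.castSucc) (f i.succ)

/-- `y` is reachable from `x` by a directed path. -/
def Reaches (G : DGraph V) (x y : V) : Prop := Relation.ReflTransGen G.Adj x y

/-- The induced subgraph on a set of vertices. -/
def induce (G : DGraph V) (A : Set V) : DGraph A := ⟨fun a b => G.Adj a.1 b.1⟩

end DGraph

variable {V : Type}

/-- Validity of a tuple as a magnitude-chain basis element of degree `k` and length `ℓ`:
consecutive entries are distinct, at finite distance, and the total length is `ℓ`. -/
def MCValid (G : DGraph V) (k ℓ : ℕ) (f : Fin (k + 1) → V) : Prop :=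
  (∀ i : Fin k, G.edist (f i.castSucc) (f i.succ) ≠ 0 ∧ G.edist (f i.castSucc) (f i.succ) ≠ ⊤) ∧
    G.tlen f = (ℓ : ℕ∞)

/-- Basis of the magnitude chain group `MC_{k,ℓ}(G)`. -/
def MCb (G : DGraph V) (k ℓ : ℕ) : Type := {f : Fin (k + 1) → V // MCValid G k ℓ f}

/-- The magnitude chain group `MC_{k,ℓ}(G)` with coefficients in `R`. -/
abbrev MCMod (R : Type) [CommRing R] (G : DGraph V) (k ℓ : ℕ) := MCb G k ℓ →₀ R

/-- Deletion of the interior entry in position `j+1` of a `(k+2)`-tuple. -/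
def delMid {k : ℕ} (f : Fin (k + 2) → V) (j : Fin k) : Fin (k + 1) → V :=
  f ∘ (Fin.succAbove j.succ.castSucc)

/-- The magnitude-chain differential `MC_{k+1,ℓ}(G) → MC_{k,ℓ}(G)`: delete interior
entries with alternating signs, omitting any length-decreasing term. -/
noncomputable def dMC (R : Type) [CommRing R] (G : DGraph V) (k ℓ : ℕ) :
    MCMod R G (k + 1) ℓ →ₗ[R] MCMod R G k ℓ :=
  Finsupp.lsum R fun b => LinearMap.toSpanSingleton R _
    (∑ j : Fin k, (-1 : R) ^ ((j : ℕ) + 1) •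
      (if h : MCValid G k ℓ (delMid b.1 j) then
        Finsupp.single (⟨delMid b.1 j, h⟩ : MCb G k ℓ) (1 : R) else 0))

/-- The outgoing magnitude differential from degree `k` (zero in degree `0`). -/
noncomputable def dMCOut (R : Type) [CommRing R] (G : DGraph V) (ℓ : ℕ) :
    (k : ℕ) → MCMod R G k ℓ →ₗ[R] MCMod R G (k - 1) ℓ
  | 0 => 0
  | (k + 1) => dMC R G k ℓ

/-- Magnitude homology `MH_{k,ℓ}(G)` with coefficients in `R`. -/
noncomputable abbrev MH (R : Type) [CommRing R] (G : DGraph V) (k ℓ : ℕ) :=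
  letI : HasQuotient (LinearMap.ker (dMCOut R G ℓ k))
      (Submodule R (LinearMap.ker (dMCOut R G ℓ k))) :=
      @Submodule.hasQuotient R (LinearMap.ker (dMCOut R G ℓ k)) _ _ _
  LinearMap.ker (dMCOut R G ℓ k) ⧸
    (LinearMap.range (dMCOut R G ℓ (k + 1))).comap (LinearMap.ker (dMCOut R G ℓ k)).subtype

/-- Embedding of the magnitude chains into the free module on all tuples of vertices. -/
noncomputable def eMC (R : Type) [CommRing R] (G : DGraph V) (k ℓ : ℕ) :
    MCMod R G k ℓ →ₗ[R] ((Fin (k + 1) → V) →₀ R) :=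
  Finsupp.lmapDomain R R Subtype.val

/-- Basis of a subcomplex of the magnitude chains, cut out by a predicate `P` on tuples
(assumed closed under the interior deletions appearing in the differential). -/
def RCb (G : DGraph V) (P : ∀ k, (Fin (k + 1) → V) → Prop) (k ℓ : ℕ) : Type :=
  {f : Fin (k + 1) → V // MCValid G k ℓ f ∧ P k f}

/-- The degree-`k`, length-`ℓ` chain group of the subcomplex cut out by `P`. -/
abbrev RMod (R : Type) [CommRing R] (G : DGraph V) (P : ∀ k, (Fin (k + 1) → V) → Prop)
    (k ℓ : ℕ) := RCb G P k ℓ →₀ R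

/-- The differential of the subcomplex cut out by `P`. -/
noncomputable def dR (R : Type) [CommRing R] (G : DGraph V)
    (P : ∀ k, (Fin (k + 1) → V) → Prop) (k ℓ : ℕ) :
    RMod R G P (k + 1) ℓ →ₗ[R] RMod R G P k ℓ :=
  Finsupp.lsum R fun b => LinearMap.toSpanSingleton R _
    (∑ j : Fin k, (-1 : R) ^ ((j : ℕ) + 1) •
      (if h : MCValid G k ℓ (delMid b.1 j) ∧ P k (delMid b.1 j) then
        Finsupp.single (⟨delMid b.1 j, h⟩ : RCb G P k ℓ) (1 : R) else 0))

/-- The outgoing differential of the subcomplex from degree `k` (zero in degree `0`). -/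
noncomputable def dROut (R : Type) [CommRing R] (G : DGraph V)
    (P : ∀ k, (Fin (k + 1) → V) → Prop) (ℓ : ℕ) :
    (k : ℕ) → RMod R G P k ℓ →ₗ[R] RMod R G P (k - 1) ℓ
  | 0 => 0
  | (k + 1) => dR R G P k ℓ

/-- The degree-`k`, length-`ℓ` homology of the subcomplex cut out by `P`. -/
noncomputable abbrev RH (R : Type) [CommRing R] (G : DGraph V)
    (P : ∀ k, (Fin (k + 1) → V) → Prop) (k ℓ : ℕ) :=
  letI : HasQuotient (LinearMap.ker (dROut R G P ℓ k))
      (Submodule R (LinearMap.ker (dROut R G P ℓ k))) :=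
      @Submodule.hasQuotient R (LinearMap.ker (dROut R G P ℓ k)) _ _ _
  LinearMap.ker (dROut R G P ℓ k) ⧸
    (LinearMap.range (dROut R G P ℓ (k + 1))).comap (LinearMap.ker (dROut R G P ℓ k)).subtype

/-- Embedding of the subcomplex chains into the free module on all tuples of vertices. -/
noncomputable def eR (R : Type) [CommRing R] (G : DGraph V)
    (P : ∀ k, (Fin (k + 1) → V) → Prop) (k ℓ : ℕ) :
    RMod R G P k ℓ →ₗ[R] ((Fin (k + 1) → V) →₀ R) :=
  Finsupp.lmapDomain R R Subtype.val

/-- `A ⊆ V`, with projection `π`, is a cofibration in `G`: an induced subgraph inclusion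
with no edges from outside `A` into `A`, such that every vertex `x` in the reach of `A`
has a projection `π x ∈ A` with `d(a,x) = d(a,π x) + d(π x,x)` for all `a ∈ A`. -/
def IsCofib (G : DGraph V) (A : Set V) (π : V → V) : Prop :=
  (∀ u v : V, u ∉ A → v ∈ A → ¬ G.Adj u v) ∧
  (∀ x : V, (∃ a ∈ A, G.Reaches a x) →
    π x ∈ A ∧ ∀ a ∈ A, G.edist a x = G.edist a (π x) + G.edist (π x) x)

/-- The predicate cutting out the subcomplex `A_{*,ℓ}(a,x)` of `MC_{*,ℓ}(X)`: tuples
starting at `a`, ending at `x`, with all intermediate entries in `A`. -/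
def AP (A : Set V) (a x : V) : ∀ k, (Fin (k + 1) → V) → Prop :=
  fun k f => f 0 = a ∧ f (Fin.last k) = x ∧
    ∀ i : Fin (k + 1), i ≠ 0 → i ≠ Fin.last k → f i ∈ A

/-! A tuple in `A_{*,ℓ}(a,x)` of degree `k ≥ 2` has its last interior vertex `y` in `A`, and
the cofibration property gives `d(y,x) ≥ d(a,x) = ℓ`; together with the first step, of length
at least `1`, the tuple is longer than `ℓ`. Degree `0` is empty since `a ≠ x`, so the complex is
concentrated in degree `1`, where its only basis element is `(a, x)`. -/

namespace DGraph

lemma eq_of_edist_eq_zero (G : DGraph V) {x y : V} (h : G.edist x y = 0) : x = y := by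
  by_contra hne
  have hone : (1 : ℕ∞) ≤ G.edist x y := by
    refine le_sInf ?_
    rintro n ⟨m, rfl, f, hf0, hfm, -⟩
    cases m with
    | zero => exact absurd (hf0.symm.trans hfm) hne
    | succ m => exact_mod_cast Nat.succ_pos m
  simp [h] at hone

lemma edist_first_add_edist_last_le_tlen (G : DGraph V) {m : ℕ} (f : Fin (m + 3) → V) :
    G.edist (f (0 : Fin (m + 2)).castSucc) (f (0 : Fin (m + 2)).succ) +
      G.edist (f (Fin.last (m + 1)).castSucc) (f (Fin.last (m + 1)).succ) ≤ G.tlen f := by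
  rw [← Finset.sum_pair (f := fun i : Fin (m + 2) => G.edist (f i.castSucc) (f i.succ))
    (Fin.ext_iff.not.2 (by simp))]
  exact Finset.sum_le_sum_of_subset (Finset.subset_univ _)

end DGraph

section Subcomplex

variable {R : Type} [CommRing R] {G : DGraph V} {P : ∀ k, (Fin (k + 1) → V) → Prop} {ℓ : ℕ}

lemma RH.eq_zero_of_isEmpty {k : ℕ} (h : IsEmpty (RCb G P k ℓ)) (c : RH R G P k ℓ) : c = 0 := by
  obtain ⟨w, rfl⟩ := Submodule.Quotient.mk_surjective _ c
  rw [Subsingleton.elim w 0, Submodule.Quotient.mk_zero]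

lemma RH.mk_eq_zero_iff_of_isEmpty_succ {k : ℕ} (h : IsEmpty (RCb G P (k + 1) ℓ))
    (w : LinearMap.ker (dROut R G P ℓ k)) :
    (Submodule.Quotient.mk w : RH R G P k ℓ) = 0 ↔ w = 0 := by
  have hrange : LinearMap.range (dROut R G P ℓ (k + 1)) = ⊥ := by
    rw [LinearMap.range_eq_bot]
    exact Subsingleton.elim _ _
  rw [Submodule.Quotient.mk_eq_zero, hrange, Submodule.mem_comap, Submodule.mem_bot,
    Submodule.subtype_apply, ZeroMemClass.coe_eq_zero]

lemma RH.one_free_of_unique (h₀ : IsEmpty (RCb G P 0 ℓ)) (h₂ : IsEmpty (RCb G P 2 ℓ))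
    (b : RCb G P 1 ℓ) (hb : ∀ c, c = b) :
    ∃ z : LinearMap.ker (dROut R G P ℓ 1), (z : RMod R G P 1 ℓ) = Finsupp.single b 1 ∧
      (∀ y : RH R G P 1 ℓ, ∃ r : R, y = r • (Submodule.Quotient.mk z : RH R G P 1 ℓ)) ∧
      (∀ r : R, r • (Submodule.Quotient.mk z : RH R G P 1 ℓ) = 0 → r = 0) := by
  have hcycle (w : RMod R G P 1 ℓ) : w ∈ LinearMap.ker (dROut R G P ℓ 1) :=
    Subsingleton.elim _ _
  have hspan (w : RMod R G P 1 ℓ) : w = w b • Finsupp.single b 1 := by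
    ext c
    rw [hb c]
    simp
  refine ⟨⟨_, hcycle (Finsupp.single b 1)⟩, rfl, ?_, ?_⟩
  · intro y
    obtain ⟨w, rfl⟩ := Submodule.Quotient.mk_surjective _ y
    refine ⟨(w : RMod R G P 1 ℓ) b, ?_⟩
    rw [← Submodule.Quotient.mk_smul]
    exact congrArg _ (Subtype.ext (hspan w))
  · intro r hr
    rw [← Submodule.Quotient.mk_smul, RH.mk_eq_zero_iff_of_isEmpty_succ h₂] at hr
    simpa using congrArg (fun w : LinearMap.ker (dROut R G P ℓ 1) => (w : RMod R G P 1 ℓ) b) hr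

end Subcomplex

section PathSubcomplex

variable {G : DGraph V} {A : Set V} {a x : V} {ℓ : ℕ}

lemma AP.isEmpty_zero (hax : a ≠ x) : IsEmpty (RCb G (AP A a x) 0 ℓ) :=
  ⟨fun ⟨_, _, h0, hlast, _⟩ => hax (h0.symm.trans hlast)⟩

lemma AP.val_eq_pair (b : RCb G (AP A a x) 1 ℓ) : b.1 = ![a, x] := by
  funext i
  fin_cases i
  exacts [b.2.2.1, b.2.2.2.1]

lemma AP.pair_valid (hax : a ≠ x) (hℓ : (ℓ : ℕ∞) = G.edist a x) :
    MCValid G 1 ℓ ![a, x] ∧ AP A a x 1 ![a, x] := by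
  have hℓ0 : (ℓ : ℕ∞) ≠ 0 := fun h => hax (G.eq_of_edist_eq_zero (hℓ ▸ h))
  refine ⟨⟨fun i => ?_, ?_⟩, rfl, rfl, fun i h0 h1 => by fin_cases i <;> simp_all⟩
  · rw [Subsingleton.elim i 0]
    exact ⟨hℓ ▸ hℓ0, hℓ ▸ ENat.natCast_ne_top ℓ⟩
  · simpa [DGraph.tlen] using hℓ.symm

lemma AP.isEmpty_of_closest (hclose : ∀ y ∈ A, G.edist a x ≤ G.edist y x)
    (hℓ : (ℓ : ℕ∞) = G.edist a x) (m : ℕ) : IsEmpty (RCb G (AP A a x) (m + 2) ℓ) := by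
  refine ⟨fun ⟨f, ⟨hstep, hlen⟩, h0, hlast, hmid⟩ => ?_⟩
  have hy : f (Fin.last (m + 1)).castSucc ∈ A :=
    hmid _ (Fin.ext_iff.not.2 (by simp)) (Fin.ext_iff.not.2 (by simp))
  have hfirst : 1 ≤ G.edist (f (0 : Fin (m + 2)).castSucc) (f (0 : Fin (m + 2)).succ) :=
    Order.one_le_iff_ne_zero.2 (hstep 0).1
  have hend :
      (ℓ : ℕ∞) ≤ G.edist (f (Fin.last (m + 1)).castSucc) (f (Fin.last (m + 1)).succ) := by
    rw [Fin.succ_last, hlast, hℓ]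
    exact hclose _ hy
  have hlong : ((1 + ℓ : ℕ) : ℕ∞) ≤ ℓ := by
    rw [← hlen]
    push_cast
    exact (add_le_add hfirst hend).trans (G.edist_first_add_edist_last_le_tlen f)
  exact absurd (Nat.cast_le.1 hlong) (by omega)

end PathSubcomplex

/-- let `A ↪ X` be a cofibration, `x ∉ A` in the reach of `A`, `a = π x`,
and `ℓ = d(a,x) < ∞`.  Then the homology of `A_{*,ℓ}(a,x)` is a single copy of `R` in
degree `1`, generated by the class of the tuple `(π x, x)`. -/
theorem cofib_subcomplex_homology (R : Type) [CommRing R] (G : DGraph V) (A : Set V)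
    (π : V → V) (hco : IsCofib G A π) (x : V) (hx : x ∉ A)
    (hr : ∃ a ∈ A, G.Reaches a x) (ℓ : ℕ) (hℓ : (ℓ : ℕ∞) = G.edist (π x) x) :
    (∀ k, k ≠ 1 → ∀ c : RH R G (AP A (π x) x) k ℓ, c = 0) ∧
    ∃ (b : RCb G (AP A (π x) x) 1 ℓ) (z : LinearMap.ker (dROut R G (AP A (π x) x) ℓ 1)),
      b.1 = ![π x, x] ∧ (z : RMod R G (AP A (π x) x) 1 ℓ) = Finsupp.single b 1 ∧
      (∀ y : RH R G (AP A (π x) x) 1 ℓ,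
        ∃ r : R, y = r • (Submodule.Quotient.mk z : RH R G (AP A (π x) x) 1 ℓ)) ∧
      (∀ r : R, r • (Submodule.Quotient.mk z : RH R G (AP A (π x) x) 1 ℓ) = 0 → r = 0) := by
  obtain ⟨ha, hsplit⟩ := hco.2 x hr
  have hax : π x ≠ x := fun h => hx (h ▸ ha)
  have hclose : ∀ y ∈ A, G.edist (π x) x ≤ G.edist y x := fun y hy => by
    rw [hsplit y hy]
    exact le_add_self
  have hempty (k : ℕ) (hk : k ≠ 1) : IsEmpty (RCb G (AP A (π x) x) k ℓ) := by
    match k, hk with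
    | 0, _ => exact AP.isEmpty_zero hax
    | m + 2, _ => exact AP.isEmpty_of_closest hclose hℓ m
  let b : RCb G (AP A (π x) x) 1 ℓ := ⟨![π x, x], AP.pair_valid hax hℓ⟩
  obtain ⟨z, hz, hgen, hfree⟩ := RH.one_free_of_unique (R := R) (hempty 0 zero_ne_one)
    (hempty 2 (by decide)) b fun c => Subtype.ext (AP.val_eq_pair c)
  exact ⟨fun k hk => RH.eq_zero_of_isEmpty (hempty k hk), b, z, rfl, hz, hgen, hfree⟩
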